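/- arXiv:1707.00828 — 6 statements merged into one kernel-verified Lean document; each statement's English description precedes it below -/
import Mathlib

section
/- Let k ≥ 2 be an integer and let b, c be complex numbers. Then the determinant of the k×k matrix A(b,c) equals (−b·c)^{(k−1)/2}·(1 + c) if k is odd, and equals (−b)^{k/2−1}·c^{k/2}·(1 − b) if k is even. -/
/-- The `k × k` matrix `A(b,c)` with `A 0 0 = 1`, `A (k-1) (k-1) = c`,
superdiagonal entries equal to `b`, subdiagonal entries equal to `c`,
and all other entries `0`. -/
def frozenMatrix (k : ℕ) (b c : ℂ) : Matrix (Fin k) (Fin k) ℂ :=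
  Matrix.of fun i j =>
    if i.val = 0 ∧ j.val = 0 then 1
    else if i.val = k - 1 ∧ j.val = k - 1 then c
    else if j.val = i.val + 1 then b
    else if i.val = j.val + 1 then c
    else 0

/-- Auxiliary matrix: like `frozenMatrix` but with top-left entry `0`. -/
def auxN (m : ℕ) (b c : ℂ) : Matrix (Fin m) (Fin m) ℂ :=
  Matrix.of fun i j =>
    if i.val = m - 1 ∧ j.val = m - 1 then c
    else if j.val = i.val + 1 then b
    else if i.val = j.val + 1 then c
    else 0

lemma val_col2 (n : ℕ) (j : Fin n) :
    ((1 : Fin (n+2)).succAbove ((0 : Fin (n+1)).succAbove j)).val = j.val + 2 := by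
  rw [Fin.zero_succAbove]
  unfold Fin.succAbove
  rw [if_neg]
  · rfl
  · rw [Fin.lt_def]
    show ¬ (j.val + 1 < (1 : Fin (n+2)).val)
    simp

lemma val_col2' (n : ℕ) (j : Fin n) :
    ((1 : Fin (n+2)).succAbove (Fin.succ j)).val = j.val + 2 := by
  have := val_col2 n j
  rwa [Fin.zero_succAbove] at this

lemma val_row2 (n : ℕ) (i : Fin n) :
    (Fin.succ ((0 : Fin (n+1)).succAbove i)).val = i.val + 2 := by
  rw [Fin.zero_succAbove, Fin.val_succ, Fin.val_succ]

lemma val_sa10 (n : ℕ) : ((1 : Fin (n+2)).succAbove (0 : Fin (n+1))).val = 0 := by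
  unfold Fin.succAbove
  rw [if_pos]
  · simp
  · rw [Fin.lt_def]
    show (0 : Fin (n+1)).val < (1 : Fin (n+2)).val
    simp

lemma submatrix_auxN (n : ℕ) (b c : ℂ) :
    ((auxN (n+2) b c).submatrix Fin.succ ((1 : Fin (n+2)).succAbove)).submatrix
      ((0 : Fin (n+1)).succAbove) Fin.succ = auxN n b c := by
  ext i j
  have hi := i.isLt
  have hj := j.isLt
  simp only [Matrix.submatrix_apply, auxN, Matrix.of_apply, val_row2, val_col2']
  split_ifs <;> first | rfl | omega | tauto

lemma det_auxN (m : ℕ) (b c : ℂ) :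
    (auxN m b c).det =
      if Odd m then c * (-(b*c)) ^ (m/2) else (-(b*c)) ^ (m/2) := by
  induction m using Nat.strong_induction_on with
  | _ m ih =>
    match m with
    | 0 => simp [Matrix.det_fin_zero, Nat.odd_iff]
    | 1 =>
      rw [Matrix.det_fin_one]
      simp [auxN]
    | (n+2) =>
      rw [Matrix.det_succ_row_zero]
      rw [Finset.sum_eq_single (1 : Fin (n+2))]
      · -- main term
        have h1 : auxN (n+2) b c 0 (1 : Fin (n+2)) = b := by
          simp only [auxN, Matrix.of_apply, Fin.val_zero, Fin.val_one]
          split_ifs <;> first | rfl | omega | tauto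
        rw [h1]
        rw [Matrix.det_succ_column_zero]
        rw [Finset.sum_eq_single (0 : Fin (n+1))]
        · have h2 : (auxN (n+2) b c).submatrix Fin.succ ((1 : Fin (n+2)).succAbove)
              (0 : Fin (n+1)) 0 = c := by
            simp only [Matrix.submatrix_apply, auxN, Matrix.of_apply, Fin.val_succ,
              Fin.val_zero, val_sa10]
            split_ifs <;> first | rfl | omega | tauto
          rw [h2, submatrix_auxN, ih n (by omega)]
          have he : (n+2)/2 = n/2 + 1 := by omega
          rcases Nat.even_or_odd n with hpar | hpar
          · rw [if_neg (by simpa [Nat.odd_iff, Nat.even_iff] using hpar),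
              if_neg (by simp [Nat.odd_iff, Nat.even_iff] at hpar ⊢; omega), he, pow_succ]
            simp only [Fin.val_one, Fin.val_zero]
            ring
          · rw [if_pos hpar, if_pos (by simp [Nat.odd_iff] at hpar ⊢; omega), he, pow_succ]
            simp only [Fin.val_one, Fin.val_zero]
            ring
        · intro i _ hi
          have h0 : (auxN (n+2) b c).submatrix Fin.succ ((1 : Fin (n+2)).succAbove) i 0 = 0 := by
            have hiv : i.val ≠ 0 := by
              intro h; exact hi (Fin.ext (by simpa using h))
            have := i.isLt
            simp only [Matrix.submatrix_apply, auxN, Matrix.of_apply, Fin.val_succ, val_sa10]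
            split_ifs <;> first | rfl | omega | tauto
          rw [h0]; ring
        · intro h; exact absurd (Finset.mem_univ _) h
      · intro j _ hj
        have h0 : auxN (n+2) b c 0 j = 0 := by
          have hjv : j.val ≠ 1 := by
            intro h; exact hj (Fin.ext (by simpa using h))
          have := j.isLt
          simp only [auxN, Matrix.of_apply, Fin.val_zero]
          split_ifs <;> first | rfl | omega | tauto
        rw [h0]; ring
      · intro h; exact absurd (Finset.mem_univ _) h

lemma submatrix_frozen1 (n : ℕ) (b c : ℂ) :
    (frozenMatrix (n+2) b c).submatrix (Fin.succ : Fin (n+1) → Fin (n+2)) Fin.succ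
      = auxN (n+1) b c := by
  ext i j
  have hi := i.isLt
  have hj := j.isLt
  simp only [Matrix.submatrix_apply, frozenMatrix, auxN, Matrix.of_apply, Fin.val_succ]
  split_ifs <;> first | rfl | omega | tauto

lemma submatrix_frozen2 (n : ℕ) (b c : ℂ) :
    ((frozenMatrix (n+2) b c).submatrix ((1 : Fin (n+2)).succAbove) Fin.succ).submatrix
      Fin.succ ((0 : Fin (n+1)).succAbove) = auxN n b c := by
  ext i j
  have hi := i.isLt
  have hj := j.isLt
  simp only [Matrix.submatrix_apply, frozenMatrix, auxN, Matrix.of_apply, val_col2', val_row2]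
  split_ifs <;> first | rfl | omega | tauto

theorem det_frozenMatrix (k : ℕ) (hk : 2 ≤ k) (b c : ℂ) :
    (frozenMatrix k b c).det =
      if Odd k then (-(b * c)) ^ ((k - 1) / 2) * (1 + c)
      else (-b) ^ (k / 2 - 1) * c ^ (k / 2) * (1 - b) := by
  obtain ⟨n, rfl⟩ : ∃ n, k = n + 2 := ⟨k - 2, by omega⟩
  rw [Matrix.det_succ_column_zero, Fin.sum_univ_succ, Fin.sum_univ_succ]
  have h00 : frozenMatrix (n+2) b c 0 0 = 1 := by
    simp [frozenMatrix]
  have h10 : frozenMatrix (n+2) b c (Fin.succ (0 : Fin (n+1))) 0 = c := by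
    simp only [frozenMatrix, Matrix.of_apply, Fin.val_succ, Fin.val_zero]
    split_ifs <;> first | rfl | omega | tauto
  have htail : ∑ i : Fin n, (-1 : ℂ) ^ ((Fin.succ (Fin.succ i)) : ℕ) *
      frozenMatrix (n+2) b c (Fin.succ (Fin.succ i)) 0 *
      ((frozenMatrix (n+2) b c).submatrix (Fin.succ (Fin.succ i)).succAbove Fin.succ).det
      = 0 := by
    apply Finset.sum_eq_zero
    intro i _
    have h0 : frozenMatrix (n+2) b c (Fin.succ (Fin.succ i)) 0 = 0 := by
      have := i.isLt
      simp only [frozenMatrix, Matrix.of_apply, Fin.val_succ, Fin.val_zero]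
      split_ifs <;> first | rfl | omega | tauto
    rw [h0]; ring
  rw [htail, h00, h10]
  have h01 : Fin.succ (0 : Fin (n+1)) = (1 : Fin (n+2)) := by
    ext; simp
  rw [h01]
  have hsz : (0 : Fin (n+2)).succAbove = (Fin.succ : Fin (n+1) → Fin (n+2)) := by
    funext j; exact Fin.zero_succAbove j
  rw [hsz, submatrix_frozen1]
  -- expand second minor
  have hM10 : ((frozenMatrix (n+2) b c).submatrix ((1 : Fin (n+2)).succAbove) Fin.succ).det
      = b * (auxN n b c).det := by
    rw [Matrix.det_succ_row_zero, Fin.sum_univ_succ]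
    have ha : (frozenMatrix (n+2) b c).submatrix ((1 : Fin (n+2)).succAbove) Fin.succ
        0 (0 : Fin (n+1)) = b := by
      simp only [Matrix.submatrix_apply, frozenMatrix, Matrix.of_apply, val_sa10, Fin.val_succ,
        Fin.val_zero]
      split_ifs <;> first | rfl | omega | tauto
    have htail2 : ∑ j : Fin n, (-1 : ℂ) ^ ((Fin.succ j) : ℕ) *
        (frozenMatrix (n+2) b c).submatrix ((1 : Fin (n+2)).succAbove) Fin.succ 0 (Fin.succ j) *
        (((frozenMatrix (n+2) b c).submatrix ((1 : Fin (n+2)).succAbove) Fin.succ).submatrix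
          Fin.succ (Fin.succ j).succAbove).det = 0 := by
      apply Finset.sum_eq_zero
      intro j _
      have h0 : (frozenMatrix (n+2) b c).submatrix ((1 : Fin (n+2)).succAbove) Fin.succ
          0 (Fin.succ j) = 0 := by
        have := j.isLt
        simp only [Matrix.submatrix_apply, frozenMatrix, Matrix.of_apply, val_sa10, Fin.val_succ]
        split_ifs <;> first | rfl | omega | tauto
      rw [h0]; ring
    rw [htail2, ha, submatrix_frozen2]
    simp
  rw [hM10, det_auxN, det_auxN]
  have hv0 : ((0 : Fin (n+2)) : ℕ) = 0 := rfl
  have hv1 : ((1 : Fin (n+2)) : ℕ) = 1 := rfl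
  rw [hv0, hv1]
  rcases Nat.even_or_odd n with hpar | hpar
  · have hodd1 : Odd (n+1) := by simp [Nat.odd_iff, Nat.even_iff] at hpar ⊢; omega
    have hnotodd : ¬ Odd n := by simpa [Nat.odd_iff, Nat.even_iff] using hpar
    have hnotodd2 : ¬ Odd (n+2) := by simp [Nat.odd_iff, Nat.even_iff] at hpar ⊢; omega
    rw [if_pos hodd1, if_neg hnotodd, if_neg hnotodd2]
    have hp2 : n % 2 = 0 := Nat.even_iff.mp hpar
    have e1 : (n+1)/2 = n/2 := by omega
    have e2 : (n+2)/2 - 1 = n/2 := by omega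
    have e3 : (n+2)/2 = n/2 + 1 := by omega
    rw [e1, e2, e3]
    rw [show -(b*c) = (-b) * c by ring, mul_pow, pow_succ]
    ring
  · have hnotodd1 : ¬ Odd (n+1) := by simp [Nat.odd_iff] at hpar ⊢; omega
    have hodd : Odd n := hpar
    have hodd2 : Odd (n+2) := by simp [Nat.odd_iff] at hpar ⊢; omega
    rw [if_neg hnotodd1, if_pos hodd, if_pos hodd2]
    have hp2 : n % 2 = 1 := Nat.odd_iff.mp hpar
    have e1 : (n+1)/2 = n/2 + 1 := by omega
    have e2 : (n+2-1)/2 = n/2 + 1 := by omega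
    rw [e1, e2, pow_succ]
    ring
end

section
/- Let k ≥ 2 be an integer. If (b,c) = (1,−1), or (b,c) = (−1,−1) with k odd, or (b,c) = (1,1) with k even, then the k×k complex matrix A(b,c) has rank exactly k − 1. -/
theorem rank_frozenMatrix_degenerate (k : ℕ) (hk : 2 ≤ k) (b c : ℂ)
    (h : (b = 1 ∧ c = -1) ∨ (b = -1 ∧ c = -1 ∧ Odd k) ∨ (b = 1 ∧ c = 1 ∧ Even k)) :
    (frozenMatrix k b c).rank = k - 1 := by
  set A := frozenMatrix k b c with hA
  have hval : ∀ (n : ℕ) (hn : n < k), ((⟨n, hn⟩ : Fin k) : ℕ) = n := fun _ _ => rfl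
  have hAe : ∀ i j : Fin k, A i j =
      (if (i : ℕ) = 0 ∧ (j : ℕ) = 0 then 1
       else if (i : ℕ) = k - 1 ∧ (j : ℕ) = k - 1 then c
       else if (j : ℕ) = (i : ℕ) + 1 then b
       else if (i : ℕ) = (j : ℕ) + 1 then c
       else 0) := fun i j => rfl
  have hb2 : b * b = 1 := by
    rcases h with ⟨rfl, rfl⟩ | ⟨rfl, rfl, _⟩ | ⟨rfl, rfl, _⟩ <;> ring
  have hb0 : b ≠ 0 := by
    rcases h with ⟨rfl, _⟩ | ⟨rfl, _, _⟩ | ⟨rfl, _, _⟩ <;> norm_num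
  have hpar₁ : Even k → b = 1 := by
    rcases h with ⟨rfl, rfl⟩ | ⟨rfl, rfl, hodd⟩ | ⟨rfl, rfl, _⟩ <;> intro he
    · rfl
    · exact absurd he (Nat.not_even_iff_odd.mpr hodd)
    · rfl
  have hpar₂ : Odd k → c = -1 := by
    rcases h with ⟨rfl, rfl⟩ | ⟨rfl, rfl, _⟩ | ⟨rfl, rfl, heven⟩ <;> intro ho
    · rfl
    · rfl
    · exact absurd ho (Nat.not_odd_iff_even.mpr heven)
  set v : Fin k → ℂ := fun j => (-(c * b)) ^ (j.val / 2) * (-b) ^ (j.val % 2) with hv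
  have hvstep : ∀ n : ℕ, (-(c * b)) ^ ((n + 2) / 2) * (-b) ^ ((n + 2) % 2)
      = (-(c * b)) * ((-(c * b)) ^ (n / 2) * (-b) ^ (n % 2)) := by
    intro n
    have h1 : (n + 2) / 2 = n / 2 + 1 := by omega
    have h2 : (n + 2) % 2 = n % 2 := by omega
    rw [h1, h2, pow_succ]
    ring
  have hv0 : A.mulVec v = 0 := by
    funext i
    show ∑ j, A i j * v j = 0
    rcases Nat.lt_or_ge i.val 1 with hi0 | hi1
    · -- i = 0
      have hival : i.val = 0 := by omega
      rw [Finset.sum_eq_add_of_mem (⟨0, by omega⟩ : Fin k) (⟨1, by omega⟩ : Fin k)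
        (Finset.mem_univ _) (Finset.mem_univ _) (by simp only [ne_eq, Fin.mk.injEq]; omega)
        (fun j _ hj => by
          have hj0 : j.val ≠ 0 := fun hh => hj.1 (Fin.ext hh)
          have hj1 : j.val ≠ 1 := fun hh => hj.2 (Fin.ext hh)
          have hz : A i j = 0 := by
            rw [hAe, if_neg (by omega), if_neg (by omega), if_neg (by omega), if_neg (by omega)]
          rw [hz, zero_mul])]
      have e1 : A i ⟨0, by omega⟩ = 1 := by
        rw [hAe, show ((⟨0, by omega⟩ : Fin k) : ℕ) = 0 from rfl,
          if_pos (by omega : (i : ℕ) = 0 ∧ (0 : ℕ) = 0)]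
      have e2 : A i ⟨1, by omega⟩ = b := by
        rw [hAe, show ((⟨1, by omega⟩ : Fin k) : ℕ) = 1 from rfl,
          if_neg (by omega), if_neg (by omega), if_pos (by omega : (1 : ℕ) = (i : ℕ) + 1)]
      rw [e1, e2]
      simp only [hv]
      norm_num
      linear_combination -hb2
    · rcases Nat.lt_or_ge i.val (k - 1) with hik | hik
      · -- middle row
        obtain ⟨n, hn⟩ : ∃ n, i.val = n + 1 := ⟨i.val - 1, by omega⟩
        rw [Finset.sum_eq_add_of_mem (⟨n, by omega⟩ : Fin k) (⟨n + 2, by omega⟩ : Fin k)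
          (Finset.mem_univ _) (Finset.mem_univ _) (by simp only [ne_eq, Fin.mk.injEq]; omega)
          (fun j _ hj => by
            have hj0 : j.val ≠ n := fun hh => hj.1 (Fin.ext hh)
            have hj1 : j.val ≠ n + 2 := fun hh => hj.2 (Fin.ext hh)
            have hz : A i j = 0 := by
              rw [hAe, if_neg (by omega), if_neg (by omega), if_neg (by omega), if_neg (by omega)]
            rw [hz, zero_mul])]
        have e1 : A i ⟨n, by omega⟩ = c := by
          rw [hAe, show ((⟨n, by omega⟩ : Fin k) : ℕ) = n from rfl,
            if_neg (by omega), if_neg (by omega), if_neg (by omega),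
            if_pos (by omega : (i : ℕ) = n + 1)]
        have e2 : A i ⟨n + 2, by omega⟩ = b := by
          rw [hAe, show ((⟨n + 2, by omega⟩ : Fin k) : ℕ) = n + 2 from rfl,
            if_neg (by omega), if_neg (by omega), if_pos (by omega : n + 2 = (i : ℕ) + 1)]
        rw [e1, e2]
        simp only [hv]
        rw [hvstep n]
        linear_combination (-(c * ((-(c * b)) ^ (n / 2) * (-b) ^ (n % 2)))) * hb2
      · -- last row
        have hival : i.val = k - 1 := by omega
        obtain ⟨m, hm⟩ : ∃ m, k = m + 2 := ⟨k - 2, by omega⟩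
        rw [Finset.sum_eq_add_of_mem (⟨m, by omega⟩ : Fin k) (⟨m + 1, by omega⟩ : Fin k)
          (Finset.mem_univ _) (Finset.mem_univ _) (by simp only [ne_eq, Fin.mk.injEq]; omega)
          (fun j _ hj => by
            have hj0 : j.val ≠ m := fun hh => hj.1 (Fin.ext hh)
            have hj1 : j.val ≠ m + 1 := fun hh => hj.2 (Fin.ext hh)
            have hz : A i j = 0 := by
              rw [hAe, if_neg (by omega), if_neg (by omega), if_neg (by omega), if_neg (by omega)]
            rw [hz, zero_mul])]
        have e1 : A i ⟨m, by omega⟩ = c := by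
          rw [hAe, show ((⟨m, by omega⟩ : Fin k) : ℕ) = m from rfl,
            if_neg (by omega), if_neg (by omega), if_neg (by omega),
            if_pos (by omega : (i : ℕ) = m + 1)]
        have e2 : A i ⟨m + 1, by omega⟩ = c := by
          rw [hAe, show ((⟨m + 1, by omega⟩ : Fin k) : ℕ) = m + 1 from rfl,
            if_neg (by omega), if_pos (by omega : (i : ℕ) = k - 1 ∧ m + 1 = k - 1)]
        rw [e1, e2]
        simp only [hv]
        have key : (-(c * b)) ^ ((m + 1) / 2) * (-b) ^ ((m + 1) % 2)
            = -((-(c * b)) ^ (m / 2) * (-b) ^ (m % 2)) := by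
          rcases Nat.even_or_odd m with ⟨p, hp⟩ | ⟨p, hp⟩
          · have hb1 : b = 1 := hpar₁ ⟨p + 1, by omega⟩
            subst hp
            have d1 : (p + p + 1) / 2 = p := by omega
            have d2 : (p + p + 1) % 2 = 1 := by omega
            have d3 : (p + p) / 2 = p := by omega
            have d4 : (p + p) % 2 = 0 := by omega
            rw [d1, d2, d3, d4, hb1]
            ring
          · have hc1 : c = -1 := hpar₂ ⟨p + 1, by omega⟩
            subst hp
            have d1 : (2 * p + 1 + 1) / 2 = p + 1 := by omega
            have d2 : (2 * p + 1 + 1) % 2 = 0 := by omega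
            have d3 : (2 * p + 1) / 2 = p := by omega
            have d4 : (2 * p + 1) % 2 = 1 := by omega
            rw [d1, d2, d3, d4, hc1, pow_succ]
            ring
        rw [key]
        ring
  have hvne : v ≠ 0 := by
    intro hcon
    have h0 : v ⟨0, by omega⟩ = 0 := by rw [hcon]; rfl
    simp only [hv] at h0
    norm_num at h0
  have hkermem : v ∈ LinearMap.ker A.mulVecLin := by
    rw [LinearMap.mem_ker, Matrix.mulVecLin_apply]; exact hv0
  have hkerpos : 0 < Module.finrank ℂ (LinearMap.ker A.mulVecLin) := by
    have : Nontrivial (LinearMap.ker A.mulVecLin) := by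
      refine nontrivial_of_ne ⟨v, hkermem⟩ 0 ?_
      simp only [ne_eq, Submodule.mk_eq_zero]
      exact hvne
    exact Module.finrank_pos
  have hrn : A.rank + Module.finrank ℂ (LinearMap.ker A.mulVecLin) = k := by
    rw [Matrix.rank]
    have := LinearMap.finrank_range_add_finrank_ker A.mulVecLin
    rwa [Module.finrank_fintype_fun_eq_card, Fintype.card_fin] at this
  set f : Fin (k - 1) → Fin k := fun i => ⟨i.val, by omega⟩ with hf
  set g : Fin (k - 1) → Fin k := fun j => ⟨j.val + 1, by omega⟩ with hg
  set B := A.submatrix f g with hB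
  have hBentry : ∀ i j : Fin (k - 1), B i j = A ⟨i.val, by omega⟩ ⟨j.val + 1, by omega⟩ :=
    fun i j => rfl
  have hBlt : B.BlockTriangular OrderDual.toDual := by
    intro i j hij
    have hij' : (i : ℕ) < (j : ℕ) := hij
    rw [hBentry, hAe,
      if_neg (by simp only [hval]; omega), if_neg (by simp only [hval]; omega),
      if_neg (by simp only [hval]; omega), if_neg (by simp only [hval]; omega)]
  have hBdiag : ∀ i : Fin (k - 1), B i i = b := by
    intro i
    rw [hBentry, hAe,
      if_neg (by simp only [hval]; omega), if_neg (by simp only [hval]; omega),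
      if_pos (by simp only [hval])]
  have hdet : B.det = b ^ (k - 1) := by
    rw [Matrix.det_of_lowerTriangular B hBlt]
    simp only [hBdiag]
    rw [Finset.prod_const, Finset.card_univ, Fintype.card_fin]
  have hunit : IsUnit B := by
    rw [Matrix.isUnit_iff_isUnit_det, hdet]
    exact isUnit_iff_ne_zero.mpr (pow_ne_zero _ hb0)
  have hrB : B.rank = k - 1 := by
    rw [Matrix.rank_of_isUnit B hunit, Fintype.card_fin]
  have hBeq : B = ((1 : Matrix (Fin k) (Fin k) ℂ).submatrix f (Equiv.refl (Fin k))) * A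
      * ((1 : Matrix (Fin k) (Fin k) ℂ).submatrix (Equiv.refl (Fin k)) g) := by
    rw [Matrix.one_submatrix_mul, Matrix.mul_submatrix_one]
    simp [hB]
  have hle : B.rank ≤ A.rank := by
    rw [hBeq]
    exact le_trans (Matrix.rank_mul_le_left _ _) (Matrix.rank_mul_le_right _ _)
  omega
end

section
/- Let k ≥ 2 be an integer, a = π/k, and let q be a complex-valued integrable function on (0,π). Then for every nonzero complex number ρ, the characteristic function Δ_{0,0}(ρ²) := C(0,ρ)·S(π,ρ) − S(0,ρ)·C(π,ρ) satisfies Δ_{0,0}(ρ²) = sin(ρπ)/ρ + ρ^{−2}·∫_0^π W_{0,0}(t)·cos(ρt) dt, where W_{0,0} is the function associated with q. -/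
open MeasureTheory intervalIntegral

/-- The function `W_{0,0}` associated with `q`, where `a = π/k`. -/
noncomputable def W00 (k : ℕ) (q : ℝ → ℂ) (t : ℝ) : ℂ :=
  let a := Real.pi / k
  if t ∈ Set.Ioo 0 a then
    (q (Real.pi - a + t) + q (Real.pi - a - t)) / 2
  else if t ∈ Set.Ioo a (Real.pi - a) then
    (q (Real.pi - a - t) - q (Real.pi + a - t)) / 2
  else if t ∈ Set.Ioo (Real.pi - a) Real.pi then
    -(q (Real.pi + a - t) + q (t - Real.pi + a)) / 2
  else 0

/-- The solution `C(x,ρ)` of the frozen-argument equation with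
`C(a,ρ) = 1`, `C'(a,ρ) = 0`. -/
noncomputable def Cfun (a : ℝ) (q : ℝ → ℂ) (ρ : ℂ) (x : ℝ) : ℂ :=
  Complex.cos (ρ * ((x - a : ℝ) : ℂ)) +
    ρ⁻¹ * ∫ t in a..x, Complex.sin (ρ * ((x - t : ℝ) : ℂ)) * q t

/-- The solution `S(x,ρ)` with `S(a,ρ) = 0`, `S'(a,ρ) = 1`. -/
noncomputable def Sfun (a : ℝ) (ρ : ℂ) (x : ℝ) : ℂ :=
  Complex.sin (ρ * ((x - a : ℝ) : ℂ)) / ρ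

private lemma sin_mul_sin' (x y : ℂ) :
    Complex.sin x * Complex.sin y = (Complex.cos (x - y) - Complex.cos (x + y)) / 2 := by
  rw [Complex.cos_sub, Complex.cos_add]; ring

theorem charFunction_rep_dirichlet_dirichlet (k : ℕ) (hk : 2 ≤ k)
    (q : ℝ → ℂ) (hq : IntegrableOn q (Set.Ioo 0 Real.pi))
    (ρ : ℂ) (hρ : ρ ≠ 0) :
    Cfun (Real.pi / k) q ρ 0 * Sfun (Real.pi / k) ρ Real.pi -
      Sfun (Real.pi / k) ρ 0 * Cfun (Real.pi / k) q ρ Real.pi =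
    Complex.sin (ρ * Real.pi) / ρ +
      ρ ^ (-2 : ℤ) * ∫ t in (0:ℝ)..Real.pi, W00 k q t * Complex.cos (ρ * (t : ℂ)) := by
  have hπ := Real.pi_pos
  set a : ℝ := Real.pi / k with ha_def
  have hk2 : (2:ℝ) ≤ (k:ℝ) := by exact_mod_cast hk
  have hk0 : (0:ℝ) < k := by linarith
  have ha0 : 0 < a := div_pos hπ hk0
  have ha2 : a ≤ Real.pi / 2 := by
    rw [ha_def]
    exact div_le_div_of_nonneg_left hπ.le two_pos hk2
  have haa : a ≤ Real.pi - a := by linarith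
  -- basic integrability
  have hq' : IntervalIntegrable q volume 0 Real.pi := by
    rw [intervalIntegrable_iff_integrableOn_Ioo_of_le hπ.le]; exact hq
  have hqcc : ∀ (c d : ℝ) (g : ℝ → ℂ), 0 ≤ c → c ≤ d → d ≤ Real.pi → Continuous g →
      IntervalIntegrable (fun u => q u * g u) volume c d := by
    intro c d g h1 h2 h3 hg
    refine (hq'.mono_set ?_).mul_continuousOn hg.continuousOn
    rw [Set.uIcc_of_le h2, Set.uIcc_of_le hπ.le]
    exact Set.Icc_subset_Icc h1 h3
  set F : ℝ → ℂ := fun u => q u * Complex.cos (ρ * ((u - (Real.pi - a) : ℝ) : ℂ)) with hF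
  set G : ℝ → ℂ := fun u => q u * Complex.cos (ρ * ((Real.pi + a - u : ℝ) : ℂ)) with hG
  set H : ℝ → ℂ := fun u => q u * Complex.cos (ρ * ((Real.pi - a + u : ℝ) : ℂ)) with hH
  have Fint : ∀ c d : ℝ, 0 ≤ c → c ≤ d → d ≤ Real.pi → IntervalIntegrable F volume c d := by
    intro c d h1 h2 h3
    rw [hF]; exact hqcc c d _ h1 h2 h3 (by fun_prop)
  have Gint : ∀ c d : ℝ, 0 ≤ c → c ≤ d → d ≤ Real.pi → IntervalIntegrable G volume c d := by
    intro c d h1 h2 h3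
    rw [hG]; exact hqcc c d _ h1 h2 h3 (by fun_prop)
  have Hint : ∀ c d : ℝ, 0 ≤ c → c ≤ d → d ≤ Real.pi → IntervalIntegrable H volume c d := by
    intro c d h1 h2 h3
    rw [hH]; exact hqcc c d _ h1 h2 h3 (by fun_prop)
  have hne : ∀ c : ℝ, ∀ᵐ x : ℝ, x ≠ c := by
    intro c
    have h : (volume : Measure ℝ) {c} = 0 := measure_singleton c
    rw [← MeasureTheory.compl_mem_ae_iff] at h
    filter_upwards [h] with x hx
    simpa using hx
  have iWcongr : ∀ {c d : ℝ} {f g : ℝ → ℂ}, IntervalIntegrable f volume c d →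
      (∀ᵐ x : ℝ, x ∈ Set.uIoc c d → g x = f x) → IntervalIntegrable g volume c d := by
    intro c d f g hf hfg
    rw [intervalIntegrable_iff] at hf ⊢
    exact hf.congr ((ae_restrict_iff' measurableSet_uIoc).mpr
      (hfg.mono fun x h hx => (h hx).symm))
  -- substitutions
  have s1 : (∫ t in (0:ℝ)..a, q (Real.pi - a + t) * Complex.cos (ρ * (t:ℂ)))
      = ∫ u in (Real.pi - a)..Real.pi, F u := by
    have h := intervalIntegral.integral_comp_add_right (a := 0) (b := a) F (Real.pi - a)
    rw [zero_add, show a + (Real.pi - a) = Real.pi by ring] at h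
    rw [← h]
    apply intervalIntegral.integral_congr
    intro t _
    simp only [hF]
    rw [show t + (Real.pi - a) - (Real.pi - a) = t by ring,
        show Real.pi - a + t = t + (Real.pi - a) by ring]
  have s2 : (∫ t in (0:ℝ)..a, q (Real.pi - a - t) * Complex.cos (ρ * (t:ℂ)))
      = ∫ u in (Real.pi - 2*a)..(Real.pi - a), F u := by
    have h := intervalIntegral.integral_comp_sub_left (a := 0) (b := a) F (Real.pi - a)
    rw [sub_zero, show Real.pi - a - a = Real.pi - 2*a by ring] at h
    rw [← h]
    apply intervalIntegral.integral_congr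
    intro t _
    simp only [hF]
    rw [show Real.pi - a - t - (Real.pi - a) = -t by ring]
    push_cast
    rw [mul_neg, Complex.cos_neg]
  have s3 : (∫ t in a..(Real.pi - a), q (Real.pi - a - t) * Complex.cos (ρ * (t:ℂ)))
      = ∫ u in (0:ℝ)..(Real.pi - 2*a), F u := by
    have h := intervalIntegral.integral_comp_sub_left (a := a) (b := Real.pi - a) F (Real.pi - a)
    rw [sub_self, show Real.pi - a - a = Real.pi - 2*a by ring] at h
    rw [← h]
    apply intervalIntegral.integral_congr
    intro t _
    simp only [hF]
    rw [show Real.pi - a - t - (Real.pi - a) = -t by ring]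
    push_cast
    rw [mul_neg, Complex.cos_neg]
  have s4 : (∫ t in a..(Real.pi - a), q (Real.pi + a - t) * Complex.cos (ρ * (t:ℂ)))
      = ∫ u in (2*a)..Real.pi, G u := by
    have h := intervalIntegral.integral_comp_sub_left (a := a) (b := Real.pi - a) G (Real.pi + a)
    rw [show Real.pi + a - (Real.pi - a) = 2*a by ring,
        show Real.pi + a - a = Real.pi by ring] at h
    rw [← h]
    apply intervalIntegral.integral_congr
    intro t _
    simp only [hG]
    rw [show Real.pi + a - (Real.pi + a - t) = t by ring]
  have s5 : (∫ t in (Real.pi - a)..Real.pi, q (Real.pi + a - t) * Complex.cos (ρ * (t:ℂ)))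
      = ∫ u in a..(2*a), G u := by
    have h := intervalIntegral.integral_comp_sub_left (a := Real.pi - a) (b := Real.pi) G (Real.pi + a)
    rw [show Real.pi + a - Real.pi = a by ring,
        show Real.pi + a - (Real.pi - a) = 2*a by ring] at h
    rw [← h]
    apply intervalIntegral.integral_congr
    intro t _
    simp only [hG]
    rw [show Real.pi + a - (Real.pi + a - t) = t by ring]
  have s6 : (∫ t in (Real.pi - a)..Real.pi, q (t - Real.pi + a) * Complex.cos (ρ * (t:ℂ)))
      = ∫ u in (0:ℝ)..a, H u := by
    have h := intervalIntegral.integral_comp_add_right (a := Real.pi - a) (b := Real.pi) H (a - Real.pi)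
    rw [show Real.pi - a + (a - Real.pi) = 0 by ring,
        show Real.pi + (a - Real.pi) = a by ring] at h
    rw [← h]
    apply intervalIntegral.integral_congr
    intro t _
    simp only [hH]
    rw [show Real.pi - a + (t + (a - Real.pi)) = t by ring,
        show t + (a - Real.pi) = t - Real.pi + a by ring]
  -- integrability of the transported integrands
  have i1 : IntervalIntegrable (fun t => q (Real.pi - a + t) * Complex.cos (ρ * (t:ℂ))) volume 0 a := by
    have h := (Fint (Real.pi - a) Real.pi (by linarith) (by linarith) le_rfl).comp_add_right (Real.pi - a)
    rw [sub_self, show Real.pi - (Real.pi - a) = a by ring] at h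
    have he : (fun t => F (t + (Real.pi - a)))
        = fun t => q (Real.pi - a + t) * Complex.cos (ρ * (t:ℂ)) := by
      funext t; simp only [hF]
      rw [show t + (Real.pi - a) - (Real.pi - a) = t by ring,
          show t + (Real.pi - a) = Real.pi - a + t by ring]
    rwa [he] at h
  have he2 : (fun t => F (Real.pi - a - t))
      = fun t => q (Real.pi - a - t) * Complex.cos (ρ * (t:ℂ)) := by
    funext t; simp only [hF]
    rw [show Real.pi - a - t - (Real.pi - a) = -t by ring]
    push_cast
    rw [mul_neg, Complex.cos_neg]
  have i2 : IntervalIntegrable (fun t => q (Real.pi - a - t) * Complex.cos (ρ * (t:ℂ))) volume 0 a := by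
    have h := ((Fint (Real.pi - 2*a) (Real.pi - a) (by linarith) (by linarith) (by linarith)).comp_sub_left (Real.pi - a)).symm
    rw [sub_self, show Real.pi - a - (Real.pi - 2*a) = a by ring] at h
    rwa [he2] at h
  have i3 : IntervalIntegrable (fun t => q (Real.pi - a - t) * Complex.cos (ρ * (t:ℂ))) volume a (Real.pi - a) := by
    have h := ((Fint 0 (Real.pi - 2*a) (le_refl 0) (by linarith) (by linarith)).comp_sub_left (Real.pi - a)).symm
    rw [sub_zero, show Real.pi - a - (Real.pi - 2*a) = a by ring] at h
    rwa [he2] at h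
  have he4 : (fun t => G (Real.pi + a - t))
      = fun t => q (Real.pi + a - t) * Complex.cos (ρ * (t:ℂ)) := by
    funext t; simp only [hG]
    rw [show Real.pi + a - (Real.pi + a - t) = t by ring]
  have i4 : IntervalIntegrable (fun t => q (Real.pi + a - t) * Complex.cos (ρ * (t:ℂ))) volume a (Real.pi - a) := by
    have h := ((Gint (2*a) Real.pi (by linarith) (by linarith) le_rfl).comp_sub_left (Real.pi + a)).symm
    rw [show Real.pi + a - Real.pi = a by ring,
        show Real.pi + a - 2*a = Real.pi - a by ring] at h
    rwa [he4] at h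
  have i5 : IntervalIntegrable (fun t => q (Real.pi + a - t) * Complex.cos (ρ * (t:ℂ))) volume (Real.pi - a) Real.pi := by
    have h := ((Gint a (2*a) (by linarith) (by linarith) (by linarith)).comp_sub_left (Real.pi + a)).symm
    rw [show Real.pi + a - 2*a = Real.pi - a by ring,
        show Real.pi + a - a = Real.pi by ring] at h
    rwa [he4] at h
  have i6 : IntervalIntegrable (fun t => q (t - Real.pi + a) * Complex.cos (ρ * (t:ℂ))) volume (Real.pi - a) Real.pi := by
    have h := (Hint 0 a (le_refl 0) ha0.le (by linarith)).comp_add_right (a - Real.pi)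
    rw [show (0:ℝ) - (a - Real.pi) = Real.pi - a by ring,
        show a - (a - Real.pi) = Real.pi by ring] at h
    have he : (fun t => H (t + (a - Real.pi)))
        = fun t => q (t - Real.pi + a) * Complex.cos (ρ * (t:ℂ)) := by
      funext t; simp only [hH]
      rw [show Real.pi - a + (t + (a - Real.pi)) = t by ring,
          show t + (a - Real.pi) = t - Real.pi + a by ring]
    rwa [he] at h
  -- W agrees a.e. with its branch formulas
  have hWb1 : ∀ᵐ x : ℝ, x ∈ Set.uIoc (0:ℝ) a →
      W00 k q x * Complex.cos (ρ * (x:ℂ))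
        = (q (Real.pi - a + x) + q (Real.pi - a - x)) / 2 * Complex.cos (ρ * (x:ℂ)) := by
    filter_upwards [hne a] with t ht hmem
    rw [Set.uIoc_of_le ha0.le] at hmem
    have htI : t ∈ Set.Ioo 0 a := ⟨hmem.1, lt_of_le_of_ne hmem.2 ht⟩
    have hb : W00 k q t = (q (Real.pi - a + t) + q (Real.pi - a - t)) / 2 := by
      simp only [W00]
      rw [← ha_def, if_pos htI]
    rw [hb]
  have hWb2 : ∀ᵐ x : ℝ, x ∈ Set.uIoc a (Real.pi - a) →
      W00 k q x * Complex.cos (ρ * (x:ℂ))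
        = (q (Real.pi - a - x) - q (Real.pi + a - x)) / 2 * Complex.cos (ρ * (x:ℂ)) := by
    filter_upwards [hne (Real.pi - a)] with t ht hmem
    rw [Set.uIoc_of_le haa] at hmem
    have htI : t ∈ Set.Ioo a (Real.pi - a) := ⟨hmem.1, lt_of_le_of_ne hmem.2 ht⟩
    have hb : W00 k q t = (q (Real.pi - a - t) - q (Real.pi + a - t)) / 2 := by
      simp only [W00]
      rw [← ha_def, if_neg (fun hc => absurd hc.2 (not_lt.2 hmem.1.le)), if_pos htI]
    rw [hb]
  have hWb3 : ∀ᵐ x : ℝ, x ∈ Set.uIoc (Real.pi - a) Real.pi →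
      W00 k q x * Complex.cos (ρ * (x:ℂ))
        = -(q (Real.pi + a - x) + q (x - Real.pi + a)) / 2 * Complex.cos (ρ * (x:ℂ)) := by
    filter_upwards [hne Real.pi] with t ht hmem
    rw [Set.uIoc_of_le (by linarith : Real.pi - a ≤ Real.pi)] at hmem
    have htI : t ∈ Set.Ioo (Real.pi - a) Real.pi := ⟨hmem.1, lt_of_le_of_ne hmem.2 ht⟩
    have hb : W00 k q t = -(q (Real.pi + a - t) + q (t - Real.pi + a)) / 2 := by
      simp only [W00]
      rw [← ha_def, if_neg (fun hc => absurd hc.2 (not_lt.2 (le_trans haa hmem.1.le))),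
          if_neg (fun hc => absurd hc.2 (not_lt.2 hmem.1.le)), if_pos htI]
    rw [hb]
  -- piecewise evaluation of the W-integral
  have W1 : (∫ t in (0:ℝ)..a, W00 k q t * Complex.cos (ρ * (t:ℂ)))
      = ((∫ u in (Real.pi - a)..Real.pi, F u)
          + ∫ u in (Real.pi - 2*a)..(Real.pi - a), F u) / 2 := by
    rw [intervalIntegral.integral_congr_ae hWb1, ← s1, ← s2,
        ← intervalIntegral.integral_add i1 i2, ← intervalIntegral.integral_div]
    apply intervalIntegral.integral_congr
    intro t _
    ring
  have W2 : (∫ t in a..(Real.pi - a), W00 k q t * Complex.cos (ρ * (t:ℂ)))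
      = ((∫ u in (0:ℝ)..(Real.pi - 2*a), F u) - ∫ u in (2*a)..Real.pi, G u) / 2 := by
    rw [intervalIntegral.integral_congr_ae hWb2, ← s3, ← s4,
        ← intervalIntegral.integral_sub i3 i4, ← intervalIntegral.integral_div]
    apply intervalIntegral.integral_congr
    intro t _
    ring
  have W3 : (∫ t in (Real.pi - a)..Real.pi, W00 k q t * Complex.cos (ρ * (t:ℂ)))
      = -(((∫ u in a..(2*a), G u) + ∫ u in (0:ℝ)..a, H u) / 2) := by
    rw [intervalIntegral.integral_congr_ae hWb3, ← s5, ← s6,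
        ← intervalIntegral.integral_add i5 i6, ← intervalIntegral.integral_div,
        ← intervalIntegral.integral_neg]
    apply intervalIntegral.integral_congr
    intro t _
    ring
  -- interval integrability of W·cos on the pieces
  have ibr1 : IntervalIntegrable
      (fun t => (q (Real.pi - a + t) + q (Real.pi - a - t)) / 2 * Complex.cos (ρ * (t:ℂ))) volume 0 a := by
    have h := (i1.add i2).div_const 2
    have he : (fun t => (q (Real.pi - a + t) * Complex.cos (ρ * (t:ℂ))
        + q (Real.pi - a - t) * Complex.cos (ρ * (t:ℂ))) / 2)
        = fun t => (q (Real.pi - a + t) + q (Real.pi - a - t)) / 2 * Complex.cos (ρ * (t:ℂ)) := by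
      funext t; ring
    rwa [he] at h
  have ibr2 : IntervalIntegrable
      (fun t => (q (Real.pi - a - t) - q (Real.pi + a - t)) / 2 * Complex.cos (ρ * (t:ℂ))) volume a (Real.pi - a) := by
    have h := (i3.sub i4).div_const 2
    have he : (fun t => (q (Real.pi - a - t) * Complex.cos (ρ * (t:ℂ))
        - q (Real.pi + a - t) * Complex.cos (ρ * (t:ℂ))) / 2)
        = fun t => (q (Real.pi - a - t) - q (Real.pi + a - t)) / 2 * Complex.cos (ρ * (t:ℂ)) := by
      funext t; ring
    rwa [he] at h
  have ibr3 : IntervalIntegrable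
      (fun t => -(q (Real.pi + a - t) + q (t - Real.pi + a)) / 2 * Complex.cos (ρ * (t:ℂ))) volume (Real.pi - a) Real.pi := by
    have h := ((i5.add i6).div_const 2).neg
    have he : (-(fun t => (q (Real.pi + a - t) * Complex.cos (ρ * (t:ℂ))
        + q (t - Real.pi + a) * Complex.cos (ρ * (t:ℂ))) / 2) : ℝ → ℂ)
        = fun t => -(q (Real.pi + a - t) + q (t - Real.pi + a)) / 2 * Complex.cos (ρ * (t:ℂ)) := by
      funext t; simp only [Pi.neg_apply]; ring
    rwa [he] at h
  have iW1 : IntervalIntegrable (fun t => W00 k q t * Complex.cos (ρ * (t:ℂ))) volume 0 a :=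
    iWcongr ibr1 hWb1
  have iW2 : IntervalIntegrable (fun t => W00 k q t * Complex.cos (ρ * (t:ℂ))) volume a (Real.pi - a) :=
    iWcongr ibr2 hWb2
  have iW3 : IntervalIntegrable (fun t => W00 k q t * Complex.cos (ρ * (t:ℂ))) volume (Real.pi - a) Real.pi :=
    iWcongr ibr3 hWb3
  have hW : (∫ t in (0:ℝ)..Real.pi, W00 k q t * Complex.cos (ρ * (t:ℂ)))
      = ((∫ u in (Real.pi - a)..Real.pi, F u)
            + ∫ u in (Real.pi - 2*a)..(Real.pi - a), F u) / 2
        + (((∫ u in (0:ℝ)..(Real.pi - 2*a), F u) - ∫ u in (2*a)..Real.pi, G u) / 2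
        + -(((∫ u in a..(2*a), G u) + ∫ u in (0:ℝ)..a, H u) / 2)) := by
    rw [← intervalIntegral.integral_add_adjacent_intervals iW1 (iW2.trans iW3),
        ← intervalIntegral.integral_add_adjacent_intervals iW2 iW3, W1, W2, W3]
  -- adjacency relations
  have adjF : (∫ u in (0:ℝ)..a, F u) + (∫ u in a..Real.pi, F u)
      = (∫ u in (0:ℝ)..(Real.pi - 2*a), F u) + (∫ u in (Real.pi - 2*a)..(Real.pi - a), F u)
        + (∫ u in (Real.pi - a)..Real.pi, F u) := by
    rw [intervalIntegral.integral_add_adjacent_intervals (Fint 0 a (le_refl 0) ha0.le (by linarith))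
          (Fint a Real.pi ha0.le (by linarith) le_rfl),
        intervalIntegral.integral_add_adjacent_intervals (Fint 0 (Real.pi - 2*a) (le_refl 0) (by linarith) (by linarith))
          (Fint (Real.pi - 2*a) (Real.pi - a) (by linarith) (by linarith) (by linarith)),
        intervalIntegral.integral_add_adjacent_intervals (Fint 0 (Real.pi - a) (le_refl 0) (by linarith) (by linarith))
          (Fint (Real.pi - a) Real.pi (by linarith) (by linarith) le_rfl)]
  have adjG : (∫ u in a..(2*a), G u) + (∫ u in (2*a)..Real.pi, G u) = ∫ u in a..Real.pi, G u :=
    intervalIntegral.integral_add_adjacent_intervals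
      (Gint a (2*a) ha0.le (by linarith) (by linarith))
      (Gint (2*a) Real.pi (by linarith) (by linarith) le_rfl)
  -- the two product integrals from C and S
  have c1 : Complex.sin (ρ * ((Real.pi - a : ℝ) : ℂ)) *
        (∫ t in a..(0:ℝ), Complex.sin (ρ * ((0 - t : ℝ) : ℂ)) * q t)
      = ((∫ u in (0:ℝ)..a, F u) - ∫ u in (0:ℝ)..a, H u) / 2 := by
    rw [intervalIntegral.integral_symm 0 a, mul_neg, ← intervalIntegral.integral_const_mul]
    have e : (∫ t in (0:ℝ)..a, Complex.sin (ρ * ((Real.pi - a : ℝ) : ℂ))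
          * (Complex.sin (ρ * ((0 - t : ℝ) : ℂ)) * q t))
        = ∫ t in (0:ℝ)..a, (H t - F t) / 2 := by
      apply intervalIntegral.integral_congr
      intro t _
      beta_reduce
      have h1 : ρ * ((Real.pi - a : ℝ) : ℂ) - ρ * ((0 - t : ℝ) : ℂ)
          = ρ * ((Real.pi - a + t : ℝ) : ℂ) := by push_cast; ring
      have h2 : ρ * ((Real.pi - a : ℝ) : ℂ) + ρ * ((0 - t : ℝ) : ℂ)
          = -(ρ * ((t - (Real.pi - a) : ℝ) : ℂ)) := by push_cast; ring
      rw [← mul_assoc, sin_mul_sin', h1, h2, Complex.cos_neg]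
      simp only [hH, hF]
      ring
    rw [e, intervalIntegral.integral_div,
        intervalIntegral.integral_sub (Hint 0 a (le_refl 0) ha0.le (by linarith))
          (Fint 0 a (le_refl 0) ha0.le (by linarith))]
    ring
  have c2 : Complex.sin (ρ * ((0 - a : ℝ) : ℂ)) *
        (∫ t in a..Real.pi, Complex.sin (ρ * ((Real.pi - t : ℝ) : ℂ)) * q t)
      = ((∫ u in a..Real.pi, G u) - ∫ u in a..Real.pi, F u) / 2 := by
    rw [← intervalIntegral.integral_const_mul]
    have e : (∫ t in a..Real.pi, Complex.sin (ρ * ((0 - a : ℝ) : ℂ))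
          * (Complex.sin (ρ * ((Real.pi - t : ℝ) : ℂ)) * q t))
        = ∫ t in a..Real.pi, (G t - F t) / 2 := by
      apply intervalIntegral.integral_congr
      intro t _
      beta_reduce
      have h1 : ρ * ((0 - a : ℝ) : ℂ) - ρ * ((Real.pi - t : ℝ) : ℂ)
          = -(ρ * ((Real.pi + a - t : ℝ) : ℂ)) := by push_cast; ring
      have h2 : ρ * ((0 - a : ℝ) : ℂ) + ρ * ((Real.pi - t : ℝ) : ℂ)
          = -(ρ * ((t - (Real.pi - a) : ℝ) : ℂ)) := by push_cast; ring
      rw [← mul_assoc, sin_mul_sin', h1, h2, Complex.cos_neg, Complex.cos_neg]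
      simp only [hG, hF]
      ring
    rw [e, intervalIntegral.integral_div,
        intervalIntegral.integral_sub (Gint a Real.pi ha0.le (by linarith) le_rfl)
          (Fint a Real.pi ha0.le (by linarith) le_rfl)]
  -- trigonometric identity
  have trig : Complex.cos (ρ * ((0 - a : ℝ) : ℂ)) * Complex.sin (ρ * ((Real.pi - a : ℝ) : ℂ))
      - Complex.sin (ρ * ((0 - a : ℝ) : ℂ)) * Complex.cos (ρ * ((Real.pi - a : ℝ) : ℂ))
      = Complex.sin (ρ * (Real.pi : ℂ)) := by
    rw [show ρ * (Real.pi : ℂ)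
        = ρ * ((Real.pi - a : ℝ) : ℂ) - ρ * ((0 - a : ℝ) : ℂ) by push_cast; ring,
      Complex.sin_sub]
    ring
  have hρ2 : ρ ^ (-2 : ℤ) = ρ⁻¹ * ρ⁻¹ := by
    rw [zpow_neg, show (2:ℤ) = ((2:ℕ):ℤ) by rfl, zpow_natCast, pow_two, mul_inv]
  simp only [Cfun, Sfun]
  rw [hW, hρ2]
  linear_combination ρ⁻¹ * trig + ρ⁻¹ * ρ⁻¹ * c1 - ρ⁻¹ * ρ⁻¹ * c2
    + (ρ⁻¹ * ρ⁻¹ / 2) * adjF + (ρ⁻¹ * ρ⁻¹ / 2) * adjG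
end

section
/- Let k ≥ 2 be an integer, a = π/k, and let q : (0,π) → ℂ be any function. Then for every t ∈ (0,a), the function W_{0,0} associated with q satisfies ∑_{j=0}^{⌊(k−1)/2⌋} W_{0,0}(2ja + t) + ∑_{j=1}^{⌊k/2⌋} W_{0,0}(2ja − t) = 0. -/
/-!
Write `a = π / k`. For `0 < t < a` the evaluation points `2ja ± t` are the successive reflections
`p₀ = t`, `pₘ₊₁ = 2(m+1)a - pₘ` of `t` in the lines `x = ma`, one in each interval `(ma, (m+1)a)`.
On the middle intervals `W₀₀(pₘ) = (q(π + a - pₘ₊₂) - q(π + a - pₘ)) / 2` because `pₘ₊₂ = pₘ + 2a`,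
so the sum telescopes, and the two outer terms cancel what is left because `p₀ + p₁ = 2a` and
`pₖ₋₁ + pₖ = 2π`.
-/

open Finset Real

lemma Finset.sum_range_eq_sum_even_add_sum_odd {M : Type*} [AddCommMonoid M] (f : ℕ → M) (n : ℕ) :
    ∑ m ∈ range n, f m =
      ∑ j ∈ range ((n + 1) / 2), f (2 * j) + ∑ j ∈ range (n / 2), f (2 * j + 1) := by
  induction n with
  | zero => simp
  | succ n ih =>
    rcases Nat.even_or_odd' n with ⟨r, rfl | rfl⟩
    · rw [sum_range_succ, ih, show (2 * r + 1 + 1) / 2 = r + 1 by omega,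
        show (2 * r + 1) / 2 = r by omega, show 2 * r / 2 = r by omega, sum_range_succ]
      abel
    · rw [sum_range_succ, ih, show (2 * r + 1 + 1 + 1) / 2 = r + 1 by omega,
        show (2 * r + 1 + 1) / 2 = r + 1 by omega, show (2 * r + 1) / 2 = r by omega,
        sum_range_succ (fun j => f (2 * j + 1))]
      abel

def reflectedPoint (a t : ℝ) : ℕ → ℝ
  | 0 => t
  | m + 1 => 2 * (m + 1) * a - reflectedPoint a t m

namespace reflectedPoint

variable (a t : ℝ)

lemma add_succ (m : ℕ) : reflectedPoint a t m + reflectedPoint a t (m + 1) = 2 * (m + 1) * a := by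
  simp only [reflectedPoint]
  ring

lemma add_two (m : ℕ) : reflectedPoint a t (m + 2) = reflectedPoint a t m + 2 * a := by
  simp only [reflectedPoint]
  push_cast
  ring

lemma two_mul (j : ℕ) : reflectedPoint a t (2 * j) = 2 * j * a + t := by
  induction j with
  | zero => simp [reflectedPoint]
  | succ j ih =>
    rw [show 2 * (j + 1) = 2 * j + 2 by ring, add_two, ih]
    push_cast
    ring

lemma two_mul_add_one (j : ℕ) : reflectedPoint a t (2 * j + 1) = 2 * (j + 1) * a - t := by
  rw [reflectedPoint, two_mul]
  push_cast
  ring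

lemma mem_Ioo {a t : ℝ} (ht0 : 0 < t) (hta : t < a) (m : ℕ) :
    reflectedPoint a t m ∈ Set.Ioo (m * a) ((m + 1) * a) := by
  induction m with
  | zero => simpa [reflectedPoint] using ⟨ht0, hta⟩
  | succ m ih =>
    obtain ⟨h0, h1⟩ := ih
    simp only [reflectedPoint, Set.mem_Ioo]
    push_cast
    constructor <;> linarith

end reflectedPoint

section W00

variable {k : ℕ} (q : ℝ → ℂ) {s : ℝ}

lemma W00_of_lt_of_lt (h0 : 0 < s) (h1 : s < π / k) :
    W00 k q s = (q (π - π / k + s) + q (π - π / k - s)) / 2 := by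
  simp only [W00, Set.mem_Ioo]
  rw [if_pos ⟨h0, h1⟩]

lemma W00_of_div_lt_of_lt_sub (h0 : π / k < s) (h1 : s < π - π / k) :
    W00 k q s = (q (π - π / k - s) - q (π + π / k - s)) / 2 := by
  simp only [W00, Set.mem_Ioo]
  rw [if_neg (by rintro ⟨_, h⟩; linarith), if_pos ⟨h0, h1⟩]

lemma W00_of_sub_lt_of_lt_pi (hk : 2 ≤ k) (h0 : π - π / k < s) (h1 : s < π) :
    W00 k q s = -(q (π + π / k - s) + q (s - π + π / k)) / 2 := by
  have hk' : (2 : ℝ) ≤ k := by exact_mod_cast hk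
  have : π / k ≤ π - π / k := by
    rw [le_sub_iff_add_le, ← two_mul, mul_div_assoc', div_le_iff₀ (by positivity)]
    nlinarith [pi_pos]
  simp only [W00, Set.mem_Ioo]
  rw [if_neg (by rintro ⟨_, h⟩; linarith), if_neg (by rintro ⟨_, h⟩; linarith), if_pos ⟨h0, h1⟩]

theorem sum_range_W00_reflectedPoint (hk : 2 ≤ k) {t : ℝ} (ht0 : 0 < t)
    (hta : t < π / k) : ∑ m ∈ range k, W00 k q (reflectedPoint (π / k) t m) = 0 := by
  obtain ⟨n, rfl⟩ : ∃ n, k = n + 2 := ⟨k - 2, by omega⟩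
  have hπ : π = (n + 2) * (π / (n + 2 : ℕ)) := by push_cast; field_simp
  generalize ha : π / ((n + 2 : ℕ) : ℝ) = a at hπ hta ⊢
  have hp := reflectedPoint.mem_Ioo ht0 hta
  set p := reflectedPoint a t
  set d : ℕ → ℂ := fun m => (q (π + a - p m) + q (π + a - p (m + 1))) / 2
  have first : W00 (n + 2) q (p 0) = d 1 := by
    rw [show p 0 = t from rfl, W00_of_lt_of_lt q ht0 (ha ▸ hta), ha]
    simp only [d, p, reflectedPoint]
    push_cast
    ring_nf
  have middle : ∀ m ∈ range n, W00 (n + 2) q (p (m + 1)) = d (m + 1 + 1) - d (m + 1) := by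
    intro m hm
    have hmn : (m : ℝ) + 1 ≤ n := by exact_mod_cast mem_range.mp hm
    obtain ⟨h0, h1⟩ := hp (m + 1)
    push_cast at h0 h1
    have hshift : p (m + 1 + 1 + 1) = p (m + 1) + 2 * a := reflectedPoint.add_two a t (m + 1)
    rw [W00_of_div_lt_of_lt_sub q (by nlinarith [pi_pos]) (by nlinarith), ha]
    simp only [d]
    rw [hshift]
    ring_nf
  have last : W00 (n + 2) q (p (n + 1)) = -d (n + 1) := by
    obtain ⟨h0, h1⟩ := hp (n + 1)
    push_cast at h0 h1
    have hsum : p (n + 1) + p (n + 1 + 1) = 2 * (n + 1 + 1) * a := by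
      exact_mod_cast reflectedPoint.add_succ a t (n + 1)
    rw [W00_of_sub_lt_of_lt_pi q hk (by linarith) (by linarith), ha, show p (n + 1) - π + a = π + a - p (n + 1 + 1) by linarith, neg_div]
  rw [sum_range_succ, sum_range_succ', sum_congr rfl middle, sum_range_sub (fun m => d (m + 1)),
    first, last]
  ring

end W00

theorem W00_degeneration (k : ℕ) (hk : 2 ≤ k) (q : ℝ → ℂ) :
    ∀ t ∈ Set.Ioo (0:ℝ) (Real.pi / k),
      ∑ j ∈ Finset.range ((k - 1) / 2 + 1), W00 k q (2 * j * (Real.pi / k) + t) +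
        ∑ j ∈ Finset.Icc 1 (k / 2), W00 k q (2 * j * (Real.pi / k) - t) = 0 := by
  rintro t ⟨ht0, hta⟩
  rw [← sum_range_W00_reflectedPoint q hk ht0 hta, sum_range_eq_sum_even_add_sum_odd _ k,
    show (k - 1) / 2 + 1 = (k + 1) / 2 by omega, ← Ico_add_one_right_eq_Icc,
    sum_Ico_eq_sum_range, Nat.add_one_sub_one]
  simp only [reflectedPoint.two_mul, reflectedPoint.two_mul_add_one, Nat.cast_add, Nat.cast_one,
    add_comm 1]
end

section
/- Let k ≥ 1 be an odd integer, a = π/k, and let q be a complex-valued integrable function on (0,π). Then for every integer n ≥ 1, the characteristic function Δ_{1,0} vanishes at λ = k²(n−1/2)²; that is, with ρ = k(n−1/2), C'(0,ρ)·S(π,ρ) − S'(0,ρ)·C(π,ρ) = 0. -/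
open MeasureTheory intervalIntegral

/-- The `x`-derivative `C'(x,ρ)`. -/
noncomputable def Cfun' (a : ℝ) (q : ℝ → ℂ) (ρ : ℂ) (x : ℝ) : ℂ :=
  -ρ * Complex.sin (ρ * ((x - a : ℝ) : ℂ)) +
    ∫ t in a..x, Complex.cos (ρ * ((x - t : ℝ) : ℂ)) * q t

/-- The `x`-derivative `S'(x,ρ)`. -/
noncomputable def Sfun' (a : ℝ) (ρ : ℂ) (x : ℝ) : ℂ :=
  Complex.cos (ρ * ((x - a : ℝ) : ℂ))

set_option maxHeartbeats 1000000 in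
theorem charFunction_neumann_dirichlet_degenerate_eigenvalues
    (k : ℕ) (hk : 1 ≤ k) (hodd : Odd k)
    (q : ℝ → ℂ) (hq : IntegrableOn q (Set.Ioo 0 Real.pi))
    (n : ℕ) (hn : 1 ≤ n) :
    Cfun' (Real.pi / k) q ((k : ℂ) * ((n : ℂ) - 1 / 2)) 0 *
        Sfun (Real.pi / k) ((k : ℂ) * ((n : ℂ) - 1 / 2)) Real.pi -
      Sfun' (Real.pi / k) ((k : ℂ) * ((n : ℂ) - 1 / 2)) 0 *
        Cfun (Real.pi / k) q ((k : ℂ) * ((n : ℂ) - 1 / 2)) Real.pi = 0 := by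
  obtain ⟨m, hm⟩ := hodd
  have hkR : (k : ℝ) ≠ 0 := Nat.cast_ne_zero.mpr (by omega)
  have hkC : (k : ℂ) ≠ 0 := Nat.cast_ne_zero.mpr (by omega)
  have hkC' : (k : ℂ) = 2 * m + 1 := by exact_mod_cast congrArg (Nat.cast : ℕ → ℂ) hm
  set ρ : ℂ := (k : ℂ) * ((n : ℂ) - 1 / 2) with hρ
  have hS' : Sfun' (Real.pi / k) ρ 0 = 0 := by
    unfold Sfun'
    have h : ρ * (((0 : ℝ) - Real.pi / k : ℝ) : ℂ) =
        -((2 * ((n : ℤ) - 1) + 1) * (Real.pi : ℂ) / 2) := by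
      push_cast
      field_simp
      ring
    rw [Complex.cos_eq_zero_iff]
    exact ⟨-(n : ℤ), by rw [h]; push_cast; ring⟩
  have hS : Sfun (Real.pi / k) ρ Real.pi = 0 := by
    unfold Sfun
    have h : ρ * ((Real.pi - Real.pi / k : ℝ) : ℂ) =
        (((m : ℤ) * (2 * (n : ℤ) - 1) : ℤ) : ℂ) * (Real.pi : ℂ) := by
      have hdiv : (k : ℂ) * ((Real.pi : ℂ) / (k : ℂ)) = (Real.pi : ℂ) :=
        mul_div_cancel₀ _ hkC
      push_cast
      linear_combination (-((n : ℂ) - 1/2)) * hdiv +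
        (((n : ℂ) - 1/2) * (Real.pi : ℂ)) * hkC'
    rw [h, Complex.sin_int_mul_pi, zero_div]
  rw [hS, hS', mul_zero, zero_mul, sub_zero]
end

section
/- Let k ≥ 2 be an integer, a = π/k, and let W be a complex-valued square-integrable function on (0,π) satisfying ∑_{j=0}^{⌊(k−1)/2⌋} W(2ja + t) + ∑_{j=1}^{⌊k/2⌋} W(2ja − t) = 0 for almost every t ∈ (0,a). Then for every complex-valued square-integrable function p on (0,a) there exists a complex-valued square-integrable function q on (0,π), unique up to equality almost everywhere, such that q(x) = p(x) for almost every x ∈ (0,a) and W_{0,0}(t) = W(t) for almost every t ∈ (0,π), where W_{0,0} is the function associated with q. -/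
/-!
Write `a = π / k`. Substituting `t = π + a - x`, the equation `W₀₀ = W` on `(a, π)` becomes
`q x = -q (2a - x) - 2 W (π + a - x)` for `x ∈ (a, 2a)` and
`q x = q (x - 2a) - 2 W (π + a - x)` for `x ∈ (2a, π)`.
Starting from `q = p` on `(0, a)`, these relations determine `q` on `(m a, (m + 1) a)` for
`m = 1, 2, …` in turn. Since `W₀₀` is linear in `q`, this gives uniqueness; it also gives an
explicit candidate, square integrable as a finite combination of translates and reflections of
`p` and `W`. The equation on `(0, a)`, not used in the construction, pairs the values of the
candidate at `π - a ± t`, and unrolling the recursion turns it into the hypothesis on `W`.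
-/

open MeasureTheory

open Set Real

lemma Finset.sum_Icc_one_eq_sum_range {M : Type*} [AddCommMonoid M] (g : ℕ → M) (m : ℕ) :
    ∑ j ∈ Finset.Icc 1 m, g j = ∑ i ∈ Finset.range m, g (i + 1) := by
  rw [← Finset.Ico_add_one_right_eq_Icc, Finset.range_eq_Ico, Finset.sum_Ico_add' g 0 m 1,
    zero_add]

lemma floor_div_eq_of_mem_Ico {a x : ℝ} {m : ℕ} (ha : 0 < a)
    (hx : x ∈ Ico (m * a) ((m + 1) * a)) : ⌊x / a⌋₊ = m := by
  rw [Nat.floor_eq_iff (div_nonneg ((by positivity : (0 : ℝ) ≤ m * a).trans hx.1) ha.le),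
    le_div_iff₀ ha, div_lt_iff₀ ha]
  exact hx

lemma mem_Ico_floor_div {a x : ℝ} (ha : 0 < a) (hx : 0 ≤ x) :
    x ∈ Ico (⌊x / a⌋₊ * a) ((⌊x / a⌋₊ + 1) * a) := by
  rw [mem_Ico, ← le_div_iff₀ ha, ← div_lt_iff₀ ha]
  exact ⟨Nat.floor_le (div_nonneg hx ha.le), Nat.lt_floor_add_one _⟩

section MemLp

variable {E : Type*} [NormedAddCommGroup E] {r : ENNReal} {f : ℝ → E} {u v : ℝ}

lemma MeasureTheory.MemLp.comp_sub_const_Ioo (hf : MemLp f r (volume.restrict (Ioo u v)))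
    (c : ℝ) : MemLp (fun x => f (x - c)) r (volume.restrict (Ioo (u + c) (v + c))) := by
  have hT := (measurePreserving_sub_right volume c).restrict_preimage
    (measurableSet_Ioo (a := u) (b := v))
  rw [preimage_sub_const_Ioo] at hT
  exact hf.comp_measurePreserving hT

lemma MeasureTheory.MemLp.comp_const_sub_Ioo (hf : MemLp f r (volume.restrict (Ioo u v)))
    (c : ℝ) : MemLp (fun x => f (c - x)) r (volume.restrict (Ioo (c - v) (c - u))) := by
  have hT := (Measure.measurePreserving_sub_left volume c).restrict_preimage
    (measurableSet_Ioo (a := u) (b := v))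
  rw [preimage_const_sub_Ioo] at hT
  exact hf.comp_measurePreserving hT

end MemLp

section W00

variable {k : ℕ} {q : ℝ → ℂ}

lemma W00_of_mem_Ioo {t : ℝ} (ht : t ∈ Ioo 0 (π / k)) :
    W00 k q t = (q (π - π / k + t) + q (π - π / k - t)) / 2 := by
  simp only [W00, if_pos ht]

lemma W00_pi_add_sub_of_mem_Ioo_two_mul {x : ℝ} (hx : x ∈ Ioo (2 * (π / k)) π) :
    W00 k q (π + π / k - x) = (q (x - 2 * (π / k)) - q x) / 2 := by
  obtain ⟨h₁, h₂⟩ := hx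
  simp only [W00, mem_Ioo]
  rw [if_neg (by intro h; linarith), if_pos ⟨by linarith, by linarith⟩]
  ring_nf

lemma W00_pi_add_sub_of_mem_Ioo {x : ℝ} (hk : 2 ≤ k) (hx : x ∈ Ioo (π / k) (2 * (π / k))) :
    W00 k q (π + π / k - x) = -(q x + q (2 * (π / k) - x)) / 2 := by
  obtain ⟨h₁, h₂⟩ := hx
  have h2a : 2 * (π / k) ≤ π := by
    rw [mul_div_assoc', div_le_iff₀ (by positivity)]
    have : (2 : ℝ) ≤ k := by exact_mod_cast hk
    nlinarith [pi_pos]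
  simp only [W00, mem_Ioo]
  rw [if_neg (by intro h; linarith), if_neg (by intro h; linarith),
    if_pos ⟨by linarith, by linarith⟩]
  ring_nf

lemma W00_sub (q₁ q₂ : ℝ → ℂ) (t : ℝ) :
    W00 k (q₁ - q₂) t = W00 k q₁ t - W00 k q₂ t := by
  simp only [W00, Pi.sub_apply]
  split_ifs <;> ring

end W00

/-- The solution `q` on `(m a, (m + 1) a)`: unrolling `q x = q (x - 2a) - 2 W (π + a - x)` down to
`(0, a)` (translate `p`) or to `(a, 2a)` (reflect and negate `p`) picks up one `W`-term per step. -/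
noncomputable def reconstructionPiece (p W : ℝ → ℂ) (a : ℝ) (m : ℕ) (x : ℝ) : ℂ :=
  (if Even m then p (x - m * a) else -p ((m + 1) * a - x)) -
    2 * ∑ i ∈ Finset.range ((m + 1) / 2), W (π + (2 * i + 1) * a - x)

noncomputable def reconstruction (p W : ℝ → ℂ) (a x : ℝ) : ℂ :=
  reconstructionPiece p W a ⌊x / a⌋₊ x

section Reconstruction

variable (p W : ℝ → ℂ) {a : ℝ}

lemma reconstructionPiece_zero (x : ℝ) : reconstructionPiece p W a 0 x = p x := by
  simp [reconstructionPiece]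

lemma reconstructionPiece_one (x : ℝ) :
    reconstructionPiece p W a 1 x = -p (2 * a - x) - 2 * W (π + a - x) := by
  simp [reconstructionPiece, one_add_one_eq_two]

lemma reconstructionPiece_add_two (m : ℕ) (x : ℝ) :
    reconstructionPiece p W a (m + 2) x =
      reconstructionPiece p W a m (x - 2 * a) - 2 * W (π + a - x) := by
  have hsum : ∑ i ∈ Finset.range ((m + 2 + 1) / 2), W (π + (2 * i + 1) * a - x) =
      ∑ i ∈ Finset.range ((m + 1) / 2), W (π + (2 * i + 1) * a - (x - 2 * a)) +
        W (π + a - x) := by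
    rw [show (m + 2 + 1) / 2 = (m + 1) / 2 + 1 by omega, Finset.sum_range_succ']
    congr 1
    · exact Finset.sum_congr rfl fun i _ => congrArg W (by push_cast; ring)
    · simp
  simp only [reconstructionPiece, hsum, Nat.even_add_one, not_not]
  push_cast
  ring_nf

lemma reconstructionPiece_succ_add (m : ℕ) (t : ℝ) (hπ : (m + 2) * a = π) :
    reconstructionPiece p W a (m + 1) ((m + 1) * a + t) +
        reconstructionPiece p W a m ((m + 1) * a - t) =
      -2 * (∑ i ∈ Finset.range ((m + 2) / 2), W (2 * (i + 1) * a - t) +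
        ∑ i ∈ Finset.range ((m + 1) / 2), W (2 * (i + 1) * a + t)) := by
  have h₁ : ∑ i ∈ Finset.range ((m + 1 + 1) / 2),
        W (π + (2 * i + 1) * a - ((m + 1) * a + t)) =
      ∑ i ∈ Finset.range ((m + 2) / 2), W (2 * (i + 1) * a - t) :=
    Finset.sum_congr rfl fun i _ => congrArg W (by rw [← hπ]; ring)
  have h₂ : ∑ i ∈ Finset.range ((m + 1) / 2), W (π + (2 * i + 1) * a - ((m + 1) * a - t)) =
      ∑ i ∈ Finset.range ((m + 1) / 2), W (2 * (i + 1) * a + t) :=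
    Finset.sum_congr rfl fun i _ => congrArg W (by rw [← hπ]; ring)
  have hcancel : (if Even (m + 1) then p ((m + 1) * a + t - (m + 1 : ℕ) * a)
        else -p ((m + 1 + 1 : ℕ) * a - ((m + 1) * a + t))) +
      (if Even m then p ((m + 1) * a - t - m * a)
        else -p ((m + 1) * a - ((m + 1) * a - t))) = 0 := by
    rcases Nat.even_or_odd m with hm | hm
    · simp only [Nat.even_add_one, hm, not_true, if_true, if_false]
      push_cast
      ring_nf
    · simp only [Nat.even_add_one, Nat.not_even_iff_odd.2 hm, not_false_iff, if_true, if_false]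
      push_cast
      ring_nf
  rw [reconstructionPiece, reconstructionPiece, h₁, h₂]
  push_cast at hcancel ⊢
  linear_combination hcancel

lemma reconstruction_of_mem_Ico (ha : 0 < a) {m : ℕ} {x : ℝ}
    (hx : x ∈ Ico (m * a) ((m + 1) * a)) :
    reconstruction p W a x = reconstructionPiece p W a m x := by
  rw [reconstruction, floor_div_eq_of_mem_Ico ha hx]

lemma reconstruction_of_mem_Ico_zero (ha : 0 < a) {x : ℝ} (hx : x ∈ Ico 0 a) :
    reconstruction p W a x = p x := by
  rw [reconstruction_of_mem_Ico p W ha (m := 0) (by simpa using hx), reconstructionPiece_zero]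

lemma reconstruction_of_mem_Ico_one (ha : 0 < a) {x : ℝ} (hx : x ∈ Ico a (2 * a)) :
    reconstruction p W a x = -p (2 * a - x) - 2 * W (π + a - x) := by
  rw [reconstruction_of_mem_Ico p W ha (m := 1) (by norm_num; exact hx), reconstructionPiece_one]

lemma reconstruction_of_two_mul_le (ha : 0 < a) {x : ℝ} (hx : 2 * a ≤ x) :
    reconstruction p W a x = reconstruction p W a (x - 2 * a) - 2 * W (π + a - x) := by
  have h2 : 2 ≤ ⌊x / a⌋₊ := Nat.le_floor (by rw [le_div_iff₀ ha]; push_cast; linarith)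
  have hfloor : ⌊(x - 2 * a) / a⌋₊ = ⌊x / a⌋₊ - 2 := by
    rw [sub_div, mul_div_cancel_right₀ _ ha.ne', ← Nat.floor_sub_ofNat]
  rw [reconstruction, reconstruction, hfloor, ← reconstructionPiece_add_two,
    Nat.sub_add_cancel h2]

end Reconstruction

section Existence

variable {p W : ℝ → ℂ} {k : ℕ}

lemma memLp_reconstructionPiece {m : ℕ} {a : ℝ} (hka : k * a = π) (hm : m < k)
    (hp : MemLp p 2 (volume.restrict (Ioo 0 a))) (hW : MemLp W 2 (volume.restrict (Ioo 0 π))) :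
    MemLp (reconstructionPiece p W a m) 2 (volume.restrict (Ioo (m * a) ((m + 1) * a))) := by
  have hmk : (m : ℝ) + 1 ≤ k := by exact_mod_cast hm
  have ha : 0 ≤ a := by nlinarith [pi_pos]
  have hP : MemLp (fun x => if Even m then p (x - m * a) else -p ((m + 1) * a - x)) 2
      (volume.restrict (Ioo (m * a) ((m + 1) * a))) := by
    split_ifs
    · have h := hp.comp_sub_const_Ioo (m * a)
      rwa [zero_add, add_comm, ← add_one_mul] at h
    · have h := (hp.comp_const_sub_Ioo ((m + 1) * a)).neg
      rw [add_one_mul, add_sub_cancel_right, sub_zero] at h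
      rw [add_one_mul]
      exact h
  have hW' : ∀ i ∈ Finset.range ((m + 1) / 2), MemLp (fun x => W (π + (2 * i + 1) * a - x)) 2
      (volume.restrict (Ioo (m * a) ((m + 1) * a))) := by
    intro i hi
    have hi : (2 * i + 1 : ℝ) ≤ m := by
      have := Finset.mem_range.1 hi
      exact_mod_cast (by omega : 2 * i + 1 ≤ m)
    refine (hW.comp_const_sub_Ioo (π + (2 * i + 1) * a)).mono_measure
      (Measure.restrict_mono (Ioo_subset_Ioo ?_ ?_) le_rfl) <;> nlinarith
  exact hP.sub ((memLp_finsetSum _ hW').const_mul 2)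

lemma memLp_reconstruction {a : ℝ} (ha : 0 < a) (hka : k * a = π)
    (hp : MemLp p 2 (volume.restrict (Ioo 0 a))) (hW : MemLp W 2 (volume.restrict (Ioo 0 π))) :
    MemLp (reconstruction p W a) 2 (volume.restrict (Ioo 0 π)) := by
  have hsum : (fun x => ∑ m ∈ Finset.range k,
      (Ico (m * a) ((m + 1) * a)).indicator (reconstructionPiece p W a m) x)
        =ᵐ[volume.restrict (Ioo 0 π)] reconstruction p W a := by
    filter_upwards [ae_restrict_mem measurableSet_Ioo] with x hx
    have hxk : ⌊x / a⌋₊ < k := by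
      rw [Nat.floor_lt (div_nonneg hx.1.le ha.le), div_lt_iff₀ ha, hka]
      exact hx.2
    rw [Finset.sum_eq_single_of_mem _ (Finset.mem_range.2 hxk) fun m _ hm =>
      indicator_of_notMem (fun h => hm (floor_div_eq_of_mem_Ico ha h).symm) _,
      indicator_of_mem (mem_Ico_floor_div ha hx.1.le)]
    rfl
  refine (memLp_finsetSum _ fun m hm => ?_).ae_eq hsum
  refine ((memLp_indicator_iff_restrict measurableSet_Ico).2 ?_).restrict _
  rw [← Measure.restrict_congr_set Ioo_ae_eq_Ico]
  exact memLp_reconstructionPiece hka (Finset.mem_range.1 hm) hp hW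

lemma W00_reconstruction_of_mem_Ioo (hk : 2 ≤ k) {t : ℝ} (ht : t ∈ Ioo 0 (π / k))
    (hsum : ∑ j ∈ Finset.range ((k - 1) / 2 + 1), W (2 * j * (π / k) + t) +
      ∑ j ∈ Finset.Icc 1 (k / 2), W (2 * j * (π / k) - t) = 0) :
    W00 k (reconstruction p W (π / k)) t = W t := by
  obtain ⟨m, rfl⟩ : ∃ m, k = m + 2 := ⟨k - 2, by omega⟩
  set a := π / (m + 2 : ℕ) with ha_def
  have ha : 0 < a := by positivity
  have hπ : (m + 2) * a = π := by rw [ha_def]; push_cast; field_simp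
  rw [show m + 2 - 1 = m + 1 by omega, Finset.sum_range_succ',
    Finset.sum_Icc_one_eq_sum_range] at hsum
  push_cast [mul_zero, zero_mul, zero_add] at hsum
  obtain ⟨ht₀, ht₁⟩ := ht
  rw [W00_of_mem_Ioo ⟨ht₀, ht₁⟩, show π - a + t = (m + 1) * a + t by linarith,
    show π - a - t = (m + 1) * a - t by linarith,
    reconstruction_of_mem_Ico p W ha (m := m + 1)
      ⟨by push_cast; linarith, by push_cast; linarith⟩,
    reconstruction_of_mem_Ico p W ha (m := m) ⟨by linarith, by linarith⟩,
    reconstructionPiece_succ_add p W m t hπ]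
  linear_combination (-1 : ℂ) * hsum

lemma W00_reconstruction_of_mem_Ioo_pi (hk : 2 ≤ k) {t : ℝ} (ht : t ∈ Ioo (π / k) π)
    (ht' : t ≠ π - π / k) :
    W00 k (reconstruction p W (π / k)) t = W t := by
  set a := π / k
  have ha : 0 < a := by positivity
  obtain ⟨x, rfl⟩ : ∃ x, t = π + a - x := ⟨π + a - t, by ring⟩
  obtain ⟨ht₀, ht₁⟩ := ht
  have hx : x ≠ 2 * a := fun h => ht' (by rw [h]; ring)
  rcases hx.lt_or_gt with hx | hx
  · rw [W00_pi_add_sub_of_mem_Ioo hk ⟨by linarith, hx⟩,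
      reconstruction_of_mem_Ico_one p W ha ⟨by linarith, hx⟩,
      reconstruction_of_mem_Ico_zero p W ha ⟨by linarith, by linarith⟩]
    ring
  · rw [W00_pi_add_sub_of_mem_Ioo_two_mul ⟨hx, by linarith⟩,
      reconstruction_of_two_mul_le p W ha hx.le]
    ring

lemma ae_W00_reconstruction (hk : 2 ≤ k)
    (hdeg : ∀ᵐ t ∂(volume.restrict (Ioo (0:ℝ) (π / k))),
      ∑ j ∈ Finset.range ((k - 1) / 2 + 1), W (2 * j * (π / k) + t) +
        ∑ j ∈ Finset.Icc 1 (k / 2), W (2 * j * (π / k) - t) = 0) :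
    ∀ᵐ t ∂(volume.restrict (Ioo 0 π)), W00 k (reconstruction p W (π / k)) t = W t := by
  rw [ae_restrict_iff' measurableSet_Ioo] at hdeg ⊢
  filter_upwards [hdeg, Measure.ae_ne volume (π / k), Measure.ae_ne volume (π - π / k)]
    with t hsum ht₁ ht₂ ht
  rcases ht₁.lt_or_gt with h | h
  · exact W00_reconstruction_of_mem_Ioo hk ⟨ht.1, h⟩ (hsum ⟨ht.1, h⟩)
  · exact W00_reconstruction_of_mem_Ioo_pi hk ⟨h, ht.2⟩ ht₂

end Existence

lemma ae_eq_zero_of_W00_eq_zero {k : ℕ} (hk : 2 ≤ k) {d : ℝ → ℂ}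
    (h₀ : ∀ᵐ x ∂(volume.restrict (Ioo 0 (π / k))), d x = 0)
    (hW : ∀ᵐ t ∂(volume.restrict (Ioo 0 π)), W00 k d t = 0) :
    ∀ᵐ x ∂(volume.restrict (Ioo 0 π)), d x = 0 := by
  set a := π / k with ha_def
  have ha : 0 < a := by positivity
  have hka : k * a = π := by rw [ha_def]; field_simp
  rw [ae_restrict_iff' measurableSet_Ioo] at h₀ hW ⊢
  have hW' : ∀ᵐ x, π + a - x ∈ Ioo 0 π → W00 k d (π + a - x) = 0 :=
    (Measure.measurePreserving_sub_left volume (π + a)).quasiMeasurePreserving.ae hW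
  suffices h : ∀ m, 1 ≤ m → m ≤ k → ∀ᵐ x, x ∈ Ioo 0 (m * a) → d x = 0 by
    simpa only [hka] using h k (by omega) le_rfl
  intro m hm
  induction m, hm using Nat.le_induction with
  | base => exact fun _ => by simpa using h₀
  | succ m hm ih =>
    intro hmk
    have ih := ih (by omega)
    have hm' : (1 : ℝ) ≤ m := by exact_mod_cast hm
    have hmk' : (m : ℝ) + 1 ≤ k := by exact_mod_cast hmk
    filter_upwards [ih,
      (Measure.measurePreserving_sub_left volume (2 * a)).quasiMeasurePreserving.ae ih,
      (measurePreserving_sub_right volume (2 * a)).quasiMeasurePreserving.ae ih, hW',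
      Measure.ae_ne volume a, Measure.ae_ne volume (2 * a)]
      with x h h_refl h_shift hWx hxa hx2a hx
    obtain ⟨hx₀, hx₁⟩ := hx
    push_cast at hx₁
    by_cases hxm : x < m * a
    · exact h ⟨hx₀, hxm⟩
    have hax : a < x := lt_of_le_of_ne (by nlinarith) (Ne.symm hxa)
    have hxπ : x < π := by nlinarith
    have hWx := hWx ⟨by linarith, by linarith⟩
    rcases hx2a.lt_or_gt with hx2 | hx2
    · rw [W00_pi_add_sub_of_mem_Ioo hk ⟨hax, hx2⟩, ← ha_def] at hWx
      linear_combination (-2 : ℂ) * hWx - h_refl ⟨by linarith, by nlinarith⟩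
    · rw [W00_pi_add_sub_of_mem_Ioo_two_mul ⟨hx2, hxπ⟩, ← ha_def] at hWx
      linear_combination (-2 : ℂ) * hWx + h_shift ⟨by linarith, by nlinarith⟩

theorem isospectral_potentials (k : ℕ) (hk : 2 ≤ k)
    (W : ℝ → ℂ) (hW : MemLp W 2 (volume.restrict (Set.Ioo 0 Real.pi)))
    (hdeg : ∀ᵐ t ∂(volume.restrict (Set.Ioo (0:ℝ) (Real.pi / k))),
      ∑ j ∈ Finset.range ((k - 1) / 2 + 1), W (2 * j * (Real.pi / k) + t) +
        ∑ j ∈ Finset.Icc 1 (k / 2), W (2 * j * (Real.pi / k) - t) = 0) :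
    ∀ p : ℝ → ℂ, MemLp p 2 (volume.restrict (Set.Ioo (0:ℝ) (Real.pi / k))) →
      ∃ q : ℝ → ℂ,
        (MemLp q 2 (volume.restrict (Set.Ioo 0 Real.pi)) ∧
          (∀ᵐ x ∂(volume.restrict (Set.Ioo (0:ℝ) (Real.pi / k))), q x = p x) ∧
          (∀ᵐ t ∂(volume.restrict (Set.Ioo (0:ℝ) Real.pi)), W00 k q t = W t)) ∧
        ∀ q' : ℝ → ℂ,
          (MemLp q' 2 (volume.restrict (Set.Ioo 0 Real.pi)) ∧
            (∀ᵐ x ∂(volume.restrict (Set.Ioo (0:ℝ) (Real.pi / k))), q' x = p x) ∧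
            (∀ᵐ t ∂(volume.restrict (Set.Ioo (0:ℝ) Real.pi)), W00 k q' t = W t)) →
          ∀ᵐ x ∂(volume.restrict (Set.Ioo (0:ℝ) Real.pi)), q' x = q x := by
  intro p hp
  have ha : 0 < π / k := by positivity
  have hq_p : ∀ᵐ x ∂(volume.restrict (Ioo 0 (π / k))), reconstruction p W (π / k) x = p x :=
    (ae_restrict_iff' measurableSet_Ioo).2 <| .of_forall fun x hx =>
      reconstruction_of_mem_Ico_zero p W ha (Ioo_subset_Ico_self hx)
  have hq_W := ae_W00_reconstruction (p := p) hk hdeg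
  refine ⟨reconstruction p W (π / k),
    ⟨memLp_reconstruction ha (by field_simp) hp hW, hq_p, hq_W⟩, ?_⟩
  rintro q' ⟨-, hq'_p, hq'_W⟩
  have hd := ae_eq_zero_of_W00_eq_zero hk (d := q' - reconstruction p W (π / k))
    (by filter_upwards [hq'_p, hq_p] with x h₁ h₂; simp [h₁, h₂])
    (by filter_upwards [hq'_W, hq_W] with t h₁ h₂; rw [W00_sub, h₁, h₂, sub_self])
  filter_upwards [hd] with x hx
  exact sub_eq_zero.1 hx
end
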